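/- For every x ∈ [-α,1]ⁿ, the probability distribution on Dⁿ with marginals x whose support forms a chain (with respect to the componentwise order induced by 0 ≺ 1, 0 ≺ -α) is unique. -/

import Mathlib

open Finset

/-- The three-element domain `D = {-α, 0, 1}`, abstractly. -/
inductive D3 : Type
  | neg : D3
  | zero : D3
  | one : D3
deriving DecidableEq

instance : Fintype D3 :=
  ⟨{D3.neg, D3.zero, D3.one}, by rintro (_ | _ | _) <;> simp⟩

namespace D3

/-- The embedding of `D3` into `ℝ` sending `neg ↦ -α`, `zero ↦ 0`, `one ↦ 1`. -/
def emb (α : ℝ) : D3 → ℝ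
  | neg => -α
  | zero => 0
  | one => 1

/-- The partial order `0 ≺ 1`, `0 ≺ -α`, with `1` and `-α` incomparable. -/
instance : PartialOrder D3 where
  le x y := x = y ∨ x = zero
  le_refl x := Or.inl rfl
  le_trans x y z hxy hyz := by
    rcases hxy with rfl | rfl
    · exact hyz
    · exact Or.inr rfl
  le_antisymm x y hxy hyx := by
    rcases hxy with rfl | rfl
    · rfl
    · rcases hyx with rfl | rfl <;> rfl

/-- `∧₀` : `1 ∧₀ (-α) = (-α) ∧₀ 1 = 0`, and min w.r.t. `≺` otherwise. -/
def meet0 (x y : D3) : D3 := if x = y then x else zero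

/-- `∨₀` : `1 ∨₀ (-α) = (-α) ∨₀ 1 = 0`, and max w.r.t. `≺` otherwise. -/
def join0 (x y : D3) : D3 :=
  if x = y then x else if x = zero then y else if y = zero then x else zero

/-- `∨₁` : `1 ∨₁ (-α) = (-α) ∨₁ 1 = 1`, and max w.r.t. `≺` otherwise. -/
def join1 (x y : D3) : D3 :=
  if x = y then x else if x = zero then y else if y = zero then x else one

end D3

/-- Componentwise `∧₀` on `Dⁿ`. -/
def vmeet0 {n : ℕ} (a b : Fin n → D3) : Fin n → D3 := fun i => D3.meet0 (a i) (b i)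

/-- Componentwise `∨₀` on `Dⁿ`. -/
def vjoin0 {n : ℕ} (a b : Fin n → D3) : Fin n → D3 := fun i => D3.join0 (a i) (b i)

/-- Componentwise `∨₁` on `Dⁿ`. -/
def vjoin1 {n : ℕ} (a b : Fin n → D3) : Fin n → D3 := fun i => D3.join1 (a i) (b i)

/-- `lam` is a probability distribution on `Dⁿ`. -/
def IsDist (n : ℕ) (lam : (Fin n → D3) → ℝ) : Prop :=
  (∀ a, 0 ≤ lam a ∧ lam a ≤ 1) ∧ ∑ a : Fin n → D3, lam a = 1

/-- `lam` has marginal vector `x`, i.e. `Σ_a lam(a)·a = x` in `ℝⁿ`. -/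
def HasMarginal (α : ℝ) (n : ℕ) (lam : (Fin n → D3) → ℝ) (x : Fin n → ℝ) : Prop :=
  ∀ i, ∑ a : Fin n → D3, lam a * D3.emb α (a i) = x i

/-- The support of `lam` forms a chain w.r.t. the componentwise order on `Dⁿ`. -/
def ChainSupp (n : ℕ) (lam : (Fin n → D3) → ℝ) : Prop :=
  ∀ a b : Fin n → D3, lam a ≠ 0 → lam b ≠ 0 → a ≤ b ∨ b ≤ a

/-- The box `[-α,1]ⁿ`. -/
def Box (α : ℝ) (n : ℕ) : Set (Fin n → ℝ) := {x | ∀ i, x i ∈ Set.Icc (-α) 1}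

/-- `f : Dⁿ → ℝ` is α-bisubmodular. -/
def AlphaBisub (α : ℝ) (n : ℕ) (f : (Fin n → D3) → ℝ) : Prop :=
  ∀ a b : Fin n → D3,
    f (vmeet0 a b) + α * f (vjoin0 a b) + (1 - α) * f (vjoin1 a b) ≤ f a + f b

/-- Number of zero coordinates. -/
def zc {n : ℕ} (c : Fin n → D3) : ℕ := (Finset.univ.filter fun i => c i = D3.zero).card

/-- The convex closure `f⁻(x)`. -/
noncomputable def cClos (α : ℝ) (n : ℕ) (f : (Fin n → D3) → ℝ) (x : Fin n → ℝ) : ℝ :=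
  sInf {y | ∃ lam, IsDist n lam ∧ HasMarginal α n lam x ∧ y = ∑ a : Fin n → D3, lam a * f a}

/-! Under a chain-supported distribution, for each coordinate `i` at most one of the masses
`P i = λ{a | a i = 1}` and `N i = λ{a | a i = -α}` is positive, so the marginal `x i = P i - α N i`
forces `P i = max (x i) 0` and `α N i = max (-x i) 0`. The coordinate fibres of the support are
nested, so the mass of the up-set of any `c ≠ 0` is the least fibre mass at the nonzero coordinates
of `c`; the up-set of `0` has mass `1`. Thus all up-set masses are determined by `x`, and a function
on a finite poset is determined by its up-set sums. -/

open scoped Classical in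
theorem eq_of_sum_filter_le_eq {β M : Type*} [PartialOrder β] [Fintype β] [AddCommGroup M]
    {f g : β → M} (h : ∀ c, ∑ a with c ≤ a, f a = ∑ a with c ≤ a, g a) : f = g := by
  funext c
  induction c using WellFoundedGT.induction with
  | _ c ih =>
    have hc : c ∈ ({a | c ≤ a} : Finset β) := by simp
    have hrest : ∑ a ∈ ({a | c ≤ a} : Finset β).erase c, f a
        = ∑ a ∈ ({a | c ≤ a} : Finset β).erase c, g a :=
      sum_congr rfl fun a ha => by
        obtain ⟨hne, hca⟩ := by simpa using ha
        exact ih a (lt_of_le_of_ne hca (Ne.symm hne))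
    have := h c
    rw [← add_sum_erase _ _ hc, ← add_sum_erase _ _ hc, hrest] at this
    exact add_right_cancel this

section ChainSupported

variable {n : ℕ} {lam : (Fin n → D3) → ℝ}

def fiberMass (lam : (Fin n → D3) → ℝ) (i : Fin n) (d : D3) : ℝ := ∑ a with a i = d, lam a

theorem sum_mul_emb_eq_fiberMass (α : ℝ) (lam : (Fin n → D3) → ℝ) (i : Fin n) :
    ∑ a, lam a * D3.emb α (a i) = fiberMass lam i .one - α * fiberMass lam i .neg := by
  rw [fiberMass, fiberMass, sum_filter, sum_filter, mul_sum, ← sum_sub_distrib]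
  refine sum_congr rfl fun a _ => ?_
  cases a i <;> simp [D3.emb, mul_comm]

theorem ChainSupp.fiberMass_one_eq_zero_or (h : ChainSupp n lam) (i : Fin n) :
    fiberMass lam i .one = 0 ∨ fiberMass lam i .neg = 0 := by
  by_contra! hne
  obtain ⟨a, ha, hla⟩ := exists_ne_zero_of_sum_ne_zero hne.1
  obtain ⟨b, hb, hlb⟩ := exists_ne_zero_of_sum_ne_zero hne.2
  simp only [mem_filter, mem_univ, true_and] at ha hb
  rcases h a b hla hlb with hab | hab <;> rcases hab i with h' | h' <;> simp_all

theorem ChainSupp.fiberMass_eq_max {α : ℝ} (hα : 0 ≤ α) {x : Fin n → ℝ}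
    (hpos : ∀ a, 0 ≤ lam a) (hch : ChainSupp n lam) (hx : HasMarginal α n lam x) (i : Fin n) :
    fiberMass lam i .one = max (x i) 0 ∧ α * fiberMass lam i .neg = max (-x i) 0 := by
  have hP : 0 ≤ fiberMass lam i .one := sum_nonneg fun a _ => hpos a
  have hN : 0 ≤ α * fiberMass lam i .neg := mul_nonneg hα (sum_nonneg fun a _ => hpos a)
  have hxi := hx i
  rw [sum_mul_emb_eq_fiberMass] at hxi
  rcases hch.fiberMass_one_eq_zero_or i with h0 | h0 <;> simp only [h0, mul_zero] at hP hN hxi ⊢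
  · constructor <;> [rw [max_eq_right]; rw [max_eq_left]] <;> linarith
  · constructor <;> [rw [max_eq_left]; rw [max_eq_right]] <;> linarith

theorem ChainSupp.filter_subset_total (h : ChainSupp n lam) {i j : Fin n} {d e : D3}
    (hd : d ≠ .zero) (he : e ≠ .zero) :
    ({a | a i = d} : Finset _).filter (lam · ≠ 0) ⊆ ({a | a j = e} : Finset _).filter (lam · ≠ 0) ∨
      ({a | a j = e} : Finset _).filter (lam · ≠ 0) ⊆
        ({a | a i = d} : Finset _).filter (lam · ≠ 0) := by
  by_contra! hne
  obtain ⟨a, ha, ha'⟩ := not_subset.mp hne.1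
  obtain ⟨b, hb, hb'⟩ := not_subset.mp hne.2
  simp only [mem_filter, mem_univ, true_and, not_and] at ha ha' hb hb'
  rcases h a b ha.2 hb.2 with hab | hab
  · rcases hab i with h' | h' <;> simp_all
  · rcases hab j with h' | h' <;> simp_all

open scoped Classical in
theorem ChainSupp.sum_filter_le_eq_inf' (hpos : ∀ a, 0 ≤ lam a) (hch : ChainSupp n lam)
    (c : Fin n → D3) (hc : ({i | c i ≠ .zero} : Finset _).Nonempty) :
    ∑ a with c ≤ a, lam a =
      ({i | c i ≠ .zero} : Finset _).inf' hc fun j => fiberMass lam j (c j) := by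
  set F : Fin n → Finset (Fin n → D3) := fun j => ({a | a j = c j} : Finset _).filter (lam · ≠ 0)
  obtain ⟨i₀, hi₀, hmin⟩ := exists_min_image _ (fun j => (F j).card) hc
  have hi₀c : c i₀ ≠ .zero := by simpa using hi₀
  have hF_le : F i₀ ⊆ ({a | c ≤ a} : Finset _) := by
    intro a ha
    simp only [mem_filter, mem_univ, true_and]
    intro j
    by_cases hj : c j = .zero
    · exact Or.inr hj
    refine Or.inl ?_
    have hsub : F i₀ ⊆ F j := by
      rcases hch.filter_subset_total hi₀c hj with h | h
      · exact h
      · exact (eq_of_subset_of_card_le h (hmin j (by simpa using hj))).ge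
    have := hsub ha
    simp only [F, mem_filter, mem_univ, true_and] at this
    exact this.1.symm
  refine le_antisymm (le_inf' _ _ fun j hj => ?_) (inf'_le_of_le _ hi₀ ?_)
  · refine sum_le_sum_of_subset_of_nonneg (fun a ha => ?_) fun a _ _ => hpos a
    simp only [mem_filter, mem_univ, true_and] at ha hj ⊢
    exact ((ha j).resolve_right hj).symm
  · rw [fiberMass, ← sum_filter_ne_zero]
    exact sum_le_sum_of_subset_of_nonneg hF_le fun a _ _ => hpos a

theorem fiberMass_eq_of_hasMarginal {α : ℝ} (hα : 0 < α) {x : Fin n → ℝ} {mu : (Fin n → D3) → ℝ}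
    (hlpos : ∀ a, 0 ≤ lam a) (hlch : ChainSupp n lam) (hlx : HasMarginal α n lam x)
    (hmpos : ∀ a, 0 ≤ mu a) (hmch : ChainSupp n mu) (hmx : HasMarginal α n mu x)
    (i : Fin n) {d : D3} (hd : d ≠ .zero) : fiberMass lam i d = fiberMass mu i d := by
  have hl := hlch.fiberMass_eq_max hα.le hlpos hlx i
  have hm := hmch.fiberMass_eq_max hα.le hmpos hmx i
  cases d
  · exact mul_left_cancel₀ hα.ne' (hl.2.trans hm.2.symm)
  · exact absurd rfl hd
  · exact hl.1.trans hm.1.symm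

end ChainSupported

theorem stmt2_general (α : ℝ) (hα : α ∈ Set.Ioc (0 : ℝ) 1) (n : ℕ) (x : Fin n → ℝ)
    (lam mu : (Fin n → D3) → ℝ)
    (hlam : IsDist n lam ∧ HasMarginal α n lam x ∧ ChainSupp n lam)
    (hmu : IsDist n mu ∧ HasMarginal α n mu x ∧ ChainSupp n mu) :
    lam = mu := by
  classical
  obtain ⟨⟨hl01, hlsum⟩, hlx, hlch⟩ := hlam
  obtain ⟨⟨hm01, hmsum⟩, hmx, hmch⟩ := hmu
  have hlpos a : 0 ≤ lam a := (hl01 a).1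
  have hmpos a : 0 ≤ mu a := (hm01 a).1
  refine eq_of_sum_filter_le_eq fun c => ?_
  by_cases hc : ({i | c i ≠ .zero} : Finset _).Nonempty
  · rw [hlch.sum_filter_le_eq_inf' hlpos c hc, hmch.sum_filter_le_eq_inf' hmpos c hc]
    exact inf'_congr hc rfl fun j hj =>
      fiberMass_eq_of_hasMarginal hα.1 hlpos hlch hlx hmpos hmch hmx j (by simpa using hj)
  · have hc_le : ∀ a, c ≤ a := fun a i => Or.inr (by_contra fun hi => hc ⟨i, by simpa using hi⟩)
    simp only [hc_le, filter_true, hlsum, hmsum]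

/-- uniqueness of the chain-supported distribution with marginals `x`. -/
theorem stmt2 (α : ℝ) (hα : α ∈ Set.Ioc (0 : ℝ) 1) (n : ℕ) (x : Fin n → ℝ)
    (hx : x ∈ Box α n) (lam mu : (Fin n → D3) → ℝ)
    (hlam : IsDist n lam ∧ HasMarginal α n lam x ∧ ChainSupp n lam)
    (hmu : IsDist n mu ∧ HasMarginal α n mu x ∧ ChainSupp n mu) :
    lam = mu :=
  stmt2_general α hα n x lam mu hlam hmu
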